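/- Let N ≥ 2, ħ ∈ ℝ, V: ℝ² → ℝ smooth, f_{j,0}: ℝ² → ℝ smooth for 0 ≤ j ≤ N satisfying ∂_x f_{j−1,0} + ∂_y f_{j,0} = 0 on ℝ² for all 0 ≤ j ≤ N+1 (with f_{−1,0} = f_{N+1,0} := 0), and f_{j,2}: ℝ² → ℝ smooth for 0 ≤ j ≤ N−2 (zero for indices outside this range). Define φ_{j,1} := ((j+1)/2) ∂_x f_{j+1,0} + ((N−j)/2) ∂_y f_{j,0}, φ_{j,2} := (1/2) Σ_{a=0}^{2} C(j+a, a) C(N−j−a, 2−a) ∂_x^a ∂_y^{2−a} f_{j+a,0} (with φ_{−1,2} := 0), and Q_{j,2} := 2 ∂_x φ_{j−1,2} + 2 ∂_y φ_{j,2} + ∂_x² φ_{j,1} + ∂_y² φ_{j,1}. Suppose that for all 0 ≤ j ≤ N−1 the ℓ = 1 quantum determining equations hold: 2(∂_x f_{j−1,2} + ∂_y f_{j,2}) = (j+1) f_{j+1,0} ∂_x V + (N−j) f_{j,0} ∂_y V + ħ² Q_{j,2}. Then V satisfies the same linear compatibility equation as in the classical case: Σ_{j=0}^{N−1} (−1)^j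 ∂_x^{N−1−j} ∂_y^j [ (j+1) f_{j+1,0} ∂_x V + (N−j) f_{j,0} ∂_y V ] = 0 identically on ℝ². -/

import Mathlib

noncomputable section

/-- Partial derivative with respect to `x` of a function on `ℝ²`. -/
def pdx (f : ℝ × ℝ → ℝ) : ℝ × ℝ → ℝ := fun q => fderiv ℝ f q (1, 0)

/-- Partial derivative with respect to `y` of a function on `ℝ²`. -/
def pdy (f : ℝ × ℝ → ℝ) : ℝ × ℝ → ℝ := fun q => fderiv ℝ f q (0, 1)

/-- Binomial coefficient with integer entries, equal to `0` when the lower entry is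
negative or exceeds the upper entry. -/
def intChoose (n k : ℤ) : ℝ :=
  if 0 ≤ k ∧ k ≤ n then (n.toNat.choose k.toNat : ℝ) else 0

/-- `φ_{j,1} = ((j+1)/2) ∂_x f_{j+1,0} + ((N−j)/2) ∂_y f_{j,0}`. -/
def phi1 (N : ℕ) (f0 : ℤ → ℝ × ℝ → ℝ) (j : ℤ) : ℝ × ℝ → ℝ := fun q =>
  ((j : ℝ) + 1) / 2 * pdx (f0 (j + 1)) q + ((N : ℝ) - (j : ℝ)) / 2 * pdy (f0 j) q

/-- `φ_{j,2} = (1/2) Σ_{a=0}^{2} C(j+a,a) C(N−j−a,2−a) ∂_x^a ∂_y^{2−a} f_{j+a,0}`,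
with the convention `φ_{−1,2} = 0`. -/
def phi2 (N : ℕ) (f0 : ℤ → ℝ × ℝ → ℝ) (j : ℤ) : ℝ × ℝ → ℝ :=
  if j = -1 then 0 else fun q =>
    (1 / 2) * ∑ a ∈ Finset.range 3,
      intChoose (j + (a : ℤ)) (a : ℤ) * intChoose ((N : ℤ) - j - (a : ℤ)) (2 - (a : ℤ)) *
        (pdx^[a] (pdy^[2 - a] (f0 (j + (a : ℤ))))) q

/-- The quantum correction `Q_{j,2} = 2∂_x φ_{j−1,2} + 2∂_y φ_{j,2} + ∂_x² φ_{j,1} + ∂_y² φ_{j,1}`. -/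
def Q2 (N : ℕ) (f0 : ℤ → ℝ × ℝ → ℝ) (j : ℤ) : ℝ × ℝ → ℝ := fun q =>
  2 * pdx (phi2 N f0 (j - 1)) q + 2 * pdy (phi2 N f0 j) q +
    (pdx^[2] (phi1 N f0 j)) q + (pdy^[2] (phi1 N f0 j)) q

/-!
The leading-order equations say `∂_y f_{i,0} = -∂_x f_{i-1,0}`, hence
`∂_y^b f_{i,0} = (-1)^b ∂_x^b f_{i-b,0}`; as `f_{i,0} = 0` for `i ∉ [0, N]`, every derivative of
order `> N` of every `f_{i,0}` vanishes (they are polynomials of degree `≤ N`). The correction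
`Q_{j,2}` is a combination of third derivatives of the `f_{i,0}`, so the operator
`∂_x^{N-1-j} ∂_y^j` of order `N - 1` annihilates it. Under this operator the `j`-th determining
equation becomes `2 (T_j + T_{j+1})` with `T_k = ∂_x^{N-k} ∂_y^k f_{k-1,2}`, so the alternating sum
telescopes to `2 (T_0 - (-1)^N T_N)`, and `T_0 = T_N = 0` since `f_{-1,2} = f_{N-1,2} = 0`.
-/

open Function

local notation "Smooth" => ContDiff ℝ (⊤ : ℕ∞)

section DirDeriv

variable {E F : Type*} [NormedAddCommGroup E] [NormedSpace ℝ E]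
  [NormedAddCommGroup F] [NormedSpace ℝ F]

def dirDeriv (v : E) (f : E → F) : E → F := fun q => fderiv ℝ f q v

theorem pdx_eq_dirDeriv : pdx = dirDeriv ((1, 0) : ℝ × ℝ) := rfl

theorem pdy_eq_dirDeriv : pdy = dirDeriv ((0, 1) : ℝ × ℝ) := rfl

variable {f g : E → F}

theorem ContDiff.dirDeriv (hf : Smooth f) (v : E) : Smooth (dirDeriv v f) :=
  (hf.fderiv_right (m := (⊤ : ℕ∞)) le_rfl).clm_apply contDiff_const

theorem ContDiff.iterate_dirDeriv (hf : Smooth f) (v : E) (n : ℕ) :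
    Smooth ((_root_.dirDeriv v)^[n] f) := by
  induction n generalizing f with
  | zero => exact hf
  | succ n ih => exact ih (hf.dirDeriv v)

theorem iterate_dirDeriv_zero (v : E) (n : ℕ) : (dirDeriv v)^[n] (0 : E → F) = 0 :=
  iterate_fixed (by ext; simp [dirDeriv]) n

theorem dirDeriv_add (hf : Differentiable ℝ f) (hg : Differentiable ℝ g) (v : E) :
    dirDeriv v (f + g) = dirDeriv v f + dirDeriv v g := by
  ext q
  simp [dirDeriv, fderiv_add (hf q) (hg q)]

theorem dirDeriv_const_smul (hf : Differentiable ℝ f) (c : ℝ) (v : E) :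
    dirDeriv v (c • f) = c • dirDeriv v f := by
  ext q
  simp [dirDeriv, fderiv_const_smul (hf q)]

theorem iterate_dirDeriv_add (hf : Smooth f) (hg : Smooth g) (v : E) (n : ℕ) :
    (dirDeriv v)^[n] (f + g) = (dirDeriv v)^[n] f + (dirDeriv v)^[n] g := by
  induction n generalizing f g with
  | zero => rfl
  | succ n ih =>
    rw [iterate_succ_apply,
      dirDeriv_add (hf.differentiable (by simp)) (hg.differentiable (by simp)),
      ih (hf.dirDeriv v) (hg.dirDeriv v)]
    rfl

theorem iterate_dirDeriv_const_smul (hf : Smooth f) (c : ℝ) (v : E) (n : ℕ) :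
    (dirDeriv v)^[n] (c • f) = c • (dirDeriv v)^[n] f := by
  induction n generalizing f with
  | zero => rfl
  | succ n ih =>
    rw [iterate_succ_apply, dirDeriv_const_smul (hf.differentiable (by simp)), ih (hf.dirDeriv v)]
    rfl

theorem dirDeriv_comm (hf : Smooth f) (v w : E) :
    dirDeriv v (dirDeriv w f) = dirDeriv w (dirDeriv v f) := by
  ext q
  have hdf : Differentiable ℝ (fderiv ℝ f) :=
    (hf.fderiv_right (m := (⊤ : ℕ∞)) le_rfl).differentiable (by simp)
  have hsecond (u u' : E) :
      fderiv ℝ (fun p => fderiv ℝ f p u) q u' = fderiv ℝ (fderiv ℝ f) q u' u := by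
    simp [fderiv_clm_apply (hdf q) (differentiableAt_const u)]
  show fderiv ℝ (fun p => fderiv ℝ f p w) q v = fderiv ℝ (fun p => fderiv ℝ f p v) q w
  rw [hsecond, hsecond]
  refine hf.contDiffAt.isSymmSndFDerivAt ?_ v w
  simp only [minSmoothness_of_isRCLikeNormedField]
  exact WithTop.coe_le_coe.mpr le_top

theorem iterate_dirDeriv_comm (hf : Smooth f) (v w : E) (n : ℕ) :
    (dirDeriv w)^[n] (dirDeriv v f) = dirDeriv v ((dirDeriv w)^[n] f) := by
  induction n generalizing f with
  | zero => rfl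
  | succ n ih => rw [iterate_succ_apply, ← dirDeriv_comm hf, ih (hf.dirDeriv w), iterate_succ_apply]

end DirDeriv

section DerivsVanish

variable {E F : Type*} [NormedAddCommGroup E] [NormedSpace ℝ E]
  [NormedAddCommGroup F] [NormedSpace ℝ F] {v w : E} {n : ℕ}

/-- For the coordinate directions of `ℝ²` this says that `A` is a polynomial of degree `< n`. -/
def DerivsVanishFrom (v w : E) (n : ℕ) (A : E → F) : Prop :=
  Smooth A ∧ ∀ a b : ℕ, n ≤ a + b → (dirDeriv v)^[a] ((dirDeriv w)^[b] A) = 0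

namespace DerivsVanishFrom

variable {A B : E → F}

theorem mono {m : ℕ} (h : DerivsVanishFrom v w n A) (hnm : n ≤ m) : DerivsVanishFrom v w m A :=
  ⟨h.1, fun a b hab => h.2 a b (hnm.trans hab)⟩

theorem zero : DerivsVanishFrom v w n (0 : E → F) :=
  ⟨contDiff_const, fun a b _ => by rw [iterate_dirDeriv_zero, iterate_dirDeriv_zero]⟩

theorem add (hA : DerivsVanishFrom v w n A) (hB : DerivsVanishFrom v w n B) :
    DerivsVanishFrom v w n (A + B) := by
  refine ⟨hA.1.add hB.1, fun a b hab => ?_⟩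
  rw [iterate_dirDeriv_add hA.1 hB.1, iterate_dirDeriv_add (hA.1.iterate_dirDeriv w b)
    (hB.1.iterate_dirDeriv w b), hA.2 a b hab, hB.2 a b hab, add_zero]

theorem const_smul (hA : DerivsVanishFrom v w n A) (c : ℝ) : DerivsVanishFrom v w n (c • A) := by
  refine ⟨hA.1.const_smul c, fun a b hab => ?_⟩
  rw [iterate_dirDeriv_const_smul hA.1, iterate_dirDeriv_const_smul (hA.1.iterate_dirDeriv w b),
    hA.2 a b hab, smul_zero]

theorem sum {ι : Type*} {s : Finset ι} {A : ι → E → F}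
    (h : ∀ i ∈ s, DerivsVanishFrom v w n (A i)) :
    DerivsVanishFrom v w n (fun q => ∑ i ∈ s, A i q) := by
  rw [← Finset.sum_fn]
  exact Finset.sum_induction A _ (fun _ _ => add) zero h

theorem dirDeriv_left (h : DerivsVanishFrom v w (n + 1) A) :
    DerivsVanishFrom v w n (dirDeriv v A) := by
  refine ⟨h.1.dirDeriv v, fun a b hab => ?_⟩
  rw [iterate_dirDeriv_comm h.1, ← iterate_succ_apply]
  exact h.2 (a + 1) b (by omega)

theorem dirDeriv_right (h : DerivsVanishFrom v w (n + 1) A) :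
    DerivsVanishFrom v w n (dirDeriv w A) := by
  refine ⟨h.1.dirDeriv w, fun a b hab => ?_⟩
  rw [← iterate_succ_apply]
  exact h.2 a (b + 1) (by omega)

theorem iterate_dirDeriv_left {k : ℕ} (h : DerivsVanishFrom v w (n + k) A) :
    DerivsVanishFrom v w n ((dirDeriv v)^[k] A) := by
  induction k generalizing A with
  | zero => exact h
  | succ k ih => exact ih (dirDeriv_left (by rwa [← add_assoc] at h))

theorem iterate_dirDeriv_right {k : ℕ} (h : DerivsVanishFrom v w (n + k) A) :
    DerivsVanishFrom v w n ((dirDeriv w)^[k] A) := by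
  induction k generalizing A with
  | zero => exact h
  | succ k ih => exact ih (dirDeriv_right (by rwa [← add_assoc] at h))

end DerivsVanishFrom

theorem iterate_dirDeriv_eq_of_eq_divergence_add {m k : ℕ} {s f g r : E → F} (c : ℝ)
    (hf : Smooth f) (hg : Smooth g) (hr : DerivsVanishFrom v w (m + k) r)
    (hs : s = c • (dirDeriv v f + dirDeriv w g + r)) :
    (dirDeriv v)^[m] ((dirDeriv w)^[k] s) =
      c • ((dirDeriv v)^[m + 1] ((dirDeriv w)^[k] f) +
        (dirDeriv v)^[m] ((dirDeriv w)^[k + 1] g)) := by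
  have hdiv : Smooth (dirDeriv v f + dirDeriv w g) := (hf.dirDeriv v).add (hg.dirDeriv w)
  have hsum : Smooth (dirDeriv v f + dirDeriv w g + r) := hdiv.add hr.1
  rw [hs, iterate_dirDeriv_const_smul hsum, iterate_dirDeriv_const_smul (hsum.iterate_dirDeriv w k),
    iterate_dirDeriv_add hdiv hr.1,
    iterate_dirDeriv_add (hdiv.iterate_dirDeriv w k) (hr.1.iterate_dirDeriv w k), hr.2 m k le_rfl,
    add_zero, iterate_dirDeriv_add (hf.dirDeriv v) (hg.dirDeriv w),
    iterate_dirDeriv_add ((hf.dirDeriv v).iterate_dirDeriv w k)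
      ((hg.dirDeriv w).iterate_dirDeriv w k),
    iterate_dirDeriv_comm hf, ← iterate_succ_apply, ← iterate_succ_apply (dirDeriv w)]

end DerivsVanish

section Ladder

variable {E F : Type*} [NormedAddCommGroup E] [NormedSpace ℝ E]
  [NormedAddCommGroup F] [NormedSpace ℝ F] {v w : E} {N : ℕ} {f : ℤ → E → F}

theorem dirDeriv_ladder (hzero : ∀ i, (i < 0 ∨ (N : ℤ) < i) → f i = 0)
    (hlead : ∀ i : ℤ, 0 ≤ i → i ≤ (N : ℤ) + 1 →
      ∀ q, dirDeriv v (f (i - 1)) q + dirDeriv w (f i) q = 0)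
    (i : ℤ) : dirDeriv w (f i) = -dirDeriv v (f (i - 1)) := by
  by_cases hi : 0 ≤ i ∧ i ≤ (N : ℤ) + 1
  · ext q
    exact eq_neg_of_add_eq_zero_right (hlead i hi.1 hi.2 q)
  · rw [hzero i (by omega), hzero (i - 1) (by omega)]
    ext
    simp [dirDeriv]

theorem iterate_dirDeriv_ladder (hf : ∀ i, Smooth (f i))
    (hrel : ∀ i, dirDeriv w (f i) = -dirDeriv v (f (i - 1))) (b : ℕ) (i : ℤ) :
    (dirDeriv w)^[b] (f i) = (-1 : ℝ) ^ b • (dirDeriv v)^[b] (f (i - b)) := by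
  induction b generalizing i with
  | zero => simp
  | succ b ih =>
    rw [iterate_succ_apply, hrel, ← neg_one_smul ℝ, iterate_dirDeriv_const_smul ((hf _).dirDeriv v),
      iterate_dirDeriv_comm (hf _), ih,
      dirDeriv_const_smul (((hf _).iterate_dirDeriv v b).differentiable (by simp)),
      ← iterate_succ_apply' (dirDeriv v), smul_smul, pow_succ',
      Nat.cast_succ, sub_sub, add_comm (1 : ℤ)]

theorem iterate_dirDeriv_eq_zero_of_ladder (hf : ∀ i, Smooth (f i))
    (hrel : ∀ i, dirDeriv w (f i) = -dirDeriv v (f (i - 1)))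
    (hzero : ∀ i, (i < 0 ∨ (N : ℤ) < i) → f i = 0) {n : ℕ} (hn : N < n) (i : ℤ) :
    (dirDeriv v)^[n] (f i) = 0 := by
  rcases lt_or_ge i 0 with hi | hi
  · rw [hzero i (Or.inl hi), iterate_dirDeriv_zero]
  · have h := iterate_dirDeriv_ladder hf hrel n (i + n)
    rwa [hzero (i + n) (Or.inr (by omega)), iterate_dirDeriv_zero, add_sub_cancel_right, eq_comm,
      smul_eq_zero_iff_right (pow_ne_zero _ (by norm_num))] at h

theorem derivsVanishFrom_of_ladder (hf : ∀ i, Smooth (f i))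
    (hrel : ∀ i, dirDeriv w (f i) = -dirDeriv v (f (i - 1)))
    (hzero : ∀ i, (i < 0 ∨ (N : ℤ) < i) → f i = 0) (i : ℤ) :
    DerivsVanishFrom v w (N + 1) (f i) := by
  refine ⟨hf i, fun a b hab => ?_⟩
  rw [iterate_dirDeriv_ladder hf hrel, iterate_dirDeriv_const_smul ((hf _).iterate_dirDeriv v b),
    ← iterate_add_apply, iterate_dirDeriv_eq_zero_of_ladder hf hrel hzero (by omega), smul_zero]

end Ladder

section QuantumCorrection

variable {N n : ℕ} {f0 : ℤ → ℝ × ℝ → ℝ}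

theorem derivsVanishFrom_phi1 (hf : ∀ i, DerivsVanishFrom ((1, 0) : ℝ × ℝ) (0, 1) (n + 1) (f0 i))
    (j : ℤ) : DerivsVanishFrom ((1, 0) : ℝ × ℝ) (0, 1) n (phi1 N f0 j) :=
  ((hf _).dirDeriv_left.const_smul (((j : ℝ) + 1) / 2)).add
    ((hf _).dirDeriv_right.const_smul (((N : ℝ) - j) / 2))

theorem derivsVanishFrom_phi2 (hf : ∀ i, DerivsVanishFrom ((1, 0) : ℝ × ℝ) (0, 1) (n + 2) (f0 i))
    (j : ℤ) : DerivsVanishFrom ((1, 0) : ℝ × ℝ) (0, 1) n (phi2 N f0 j) := by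
  unfold phi2
  split_ifs
  · exact .zero
  · refine (DerivsVanishFrom.sum fun a ha => ?_).const_smul (1 / 2)
    have ha : a < 3 := Finset.mem_range.mp ha
    exact (((hf _).mono (by omega)).iterate_dirDeriv_right.iterate_dirDeriv_left).const_smul _

theorem derivsVanishFrom_Q2 (hf : ∀ i, DerivsVanishFrom ((1, 0) : ℝ × ℝ) (0, 1) (n + 3) (f0 i))
    (j : ℤ) : DerivsVanishFrom ((1, 0) : ℝ × ℝ) (0, 1) n (Q2 N f0 j) := by
  have hphi1 := derivsVanishFrom_phi1 (N := N) (n := n + 2) hf j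
  have hphi2 := derivsVanishFrom_phi2 (N := N) (n := n + 1) hf
  exact ((((hphi2 _).dirDeriv_left.const_smul 2).add ((hphi2 _).dirDeriv_right.const_smul 2)).add
    hphi1.iterate_dirDeriv_left).add hphi1.iterate_dirDeriv_right

end QuantumCorrection

theorem sum_range_neg_one_pow_mul_add_succ {R : Type*} [CommRing R] (T : ℕ → R) (N : ℕ) :
    ∑ j ∈ Finset.range N, (-1) ^ j * (T j + T (j + 1)) = T 0 - (-1) ^ N * T N := by
  have h := Finset.sum_range_sub' (fun k => (-1) ^ k * T k) N
  rw [pow_zero, one_mul] at h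
  rw [← h]
  refine Finset.sum_congr rfl fun j _ => ?_
  ring

theorem stmt_7 (N : ℕ) (hbar : ℝ)
    (V : ℝ × ℝ → ℝ)
    (f0 : ℤ → ℝ × ℝ → ℝ)
    (hf0 : ∀ j : ℤ, 0 ≤ j → j ≤ (N : ℤ) → ContDiff ℝ (⊤ : ℕ∞) (f0 j))
    (hf0zero : ∀ j : ℤ, (j < 0 ∨ (N : ℤ) < j) → f0 j = 0)
    (hlead : ∀ j : ℤ, 0 ≤ j → j ≤ (N : ℤ) + 1 →
      ∀ q : ℝ × ℝ, pdx (f0 (j - 1)) q + pdy (f0 j) q = 0)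
    (f2 : ℤ → ℝ × ℝ → ℝ)
    (hf2 : ∀ j : ℤ, 0 ≤ j → j ≤ (N : ℤ) - 2 → ContDiff ℝ (⊤ : ℕ∞) (f2 j))
    (hf2zero : ∀ j : ℤ, (j < 0 ∨ (N : ℤ) - 2 < j) → f2 j = 0)
    (hdet : ∀ j : ℕ, j < N → ∀ q : ℝ × ℝ,
      2 * (pdx (f2 ((j : ℤ) - 1)) q + pdy (f2 (j : ℤ)) q) =
        ((j : ℝ) + 1) * f0 ((j : ℤ) + 1) q * pdx V q +
          ((N : ℝ) - (j : ℝ)) * f0 (j : ℤ) q * pdy V q +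
          hbar ^ 2 * Q2 N f0 (j : ℤ) q) :
    ∀ q : ℝ × ℝ,
      ∑ j ∈ Finset.range N, (-1 : ℝ) ^ j *
        (pdx^[N - 1 - j] (pdy^[j] (fun p =>
          ((j : ℝ) + 1) * f0 ((j : ℤ) + 1) p * pdx V p +
            ((N : ℝ) - (j : ℝ)) * f0 (j : ℤ) p * pdy V p))) q = 0 := by
  intro q
  simp only [pdx_eq_dirDeriv, pdy_eq_dirDeriv] at hlead hdet ⊢
  have hs0 (i : ℤ) : Smooth (f0 i) := by
    by_cases hi : 0 ≤ i ∧ i ≤ (N : ℤ)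
    exacts [hf0 i hi.1 hi.2, hf0zero i (by omega) ▸ contDiff_const]
  have hs2 (i : ℤ) : Smooth (f2 i) := by
    by_cases hi : 0 ≤ i ∧ i ≤ (N : ℤ) - 2
    exacts [hf2 i hi.1 hi.2, hf2zero i (by omega) ▸ contDiff_const]
  have hrel := dirDeriv_ladder hf0zero hlead
  have hQ (j : ℤ) : DerivsVanishFrom ((1, 0) : ℝ × ℝ) (0, 1) (N - 1) (Q2 N f0 j) :=
    derivsVanishFrom_Q2 (fun i => (derivsVanishFrom_of_ladder hs0 hrel hf0zero i).mono (by omega)) j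
  set T : ℕ → ℝ := fun k => (dirDeriv (1, 0))^[N - k] ((dirDeriv (0, 1))^[k] (f2 ((k : ℤ) - 1))) q
  have hT0 : T 0 = 0 := by simp [T, hf2zero (-1) (by omega), iterate_dirDeriv_zero]
  have hTN : T N = 0 := by simp [T, hf2zero ((N : ℤ) - 1) (by omega), iterate_dirDeriv_zero]
  rw [Finset.sum_congr rfl (g := fun j => 2 * ((-1) ^ j * (T j + T (j + 1)))) fun j hj => ?_,
    ← Finset.mul_sum, sum_range_neg_one_pow_mul_add_succ, hT0, hTN]
  · ring
  have hj : j < N := Finset.mem_range.mp hj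
  rw [iterate_dirDeriv_eq_of_eq_divergence_add 2 (hs2 ((j : ℤ) - 1)) (hs2 j)
    (((hQ j).const_smul (-hbar ^ 2 / 2)).mono (by omega)), show N - 1 - j + 1 = N - j by omega,
    show N - 1 - j = N - (j + 1) by omega]
  · simp only [T, Pi.smul_apply, Pi.add_apply, smul_eq_mul, Nat.cast_succ, add_sub_cancel_right]
    ring
  · ext p
    simp only [Pi.add_apply, Pi.smul_apply, smul_eq_mul]
    linarith [hdet j hj p]
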